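/- For τ = 0 and 0 < α ≤ 1, ρ_mSt(w; α, 0) ∼ (1/α) w^{−1}/log²(w) as w → ∞. -/

import Mathlib

/-!
Since `1 / Γ` is entire, `h s = 1 / Γ (1 - s)` is continuous with `h 0 = 1`. Writing `L = log w`,
the ratio equals `L² ∫₀^α s h(s) e^{-Ls} ds`, and the substitution `u = L s` turns this into
`∫₀^{αL} h(u / L) u e^{-u} du`. By dominated convergence (the bound is `sup |h| · u e^{-u}`) this
tends to `h 0 ∫₀^∞ u e^{-u} du = h 0 Γ(2) = 1`, which is Watson's lemma at first order.
-/

open Real Filter intervalIntegral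

/-- Lévy intensity of the mixed stable CRM. -/
noncomputable def rhoMSt (α τ w : ℝ) : ℝ :=
  (1 / (α - τ)) * ∫ s in τ..α, (s / Real.Gamma (1 - s)) * w ^ (-1 - s)

open Set MeasureTheory Topology

/-- Mathlib's `Γ` vanishes at its poles, so `(Γ x)⁻¹` is the entire function `1 / Γ`. -/
theorem Real.continuous_inv_Gamma : Continuous fun x : ℝ => (Gamma x)⁻¹ := by
  have h : (fun x : ℝ => (Gamma x)⁻¹) = fun x : ℝ => ((Complex.Gamma x)⁻¹).re := by
    funext x
    rw [Complex.Gamma_ofReal, ← Complex.ofReal_inv, Complex.ofReal_re]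
  rw [h]
  exact Complex.continuous_re.comp
    (Complex.differentiable_one_div_Gamma.continuous.comp Complex.continuous_ofReal)

theorem integrableOn_mul_exp_neg_Ioi : IntegrableOn (fun u : ℝ => u * exp (-u)) (Ioi 0) := by
  refine (GammaIntegral_convergent two_pos).congr_fun (fun u _ => ?_) measurableSet_Ioi
  norm_num [mul_comm]

theorem integral_mul_exp_neg_Ioi : ∫ u in Ioi (0 : ℝ), u * exp (-u) = 1 := by
  have h := integral_rpow_mul_exp_neg_mul_Ioi two_pos one_pos
  norm_num at h
  exact h

theorem integral_mul_mul_exp_neg_eq {h : ℝ → ℝ} {α L : ℝ} (hL : 0 < L) :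
    L ^ 2 * ∫ s in 0..α, s * h s * exp (-(L * s)) =
      ∫ u in 0..α * L, h (u / L) * (u * exp (-u)) := by
  have hsub := integral_comp_div (a := 0) (b := α * L)
    (fun s => h s * (L * s * exp (-(L * s)))) hL.ne'
  simp only [zero_div, mul_div_cancel_right₀ _ hL.ne', mul_div_cancel₀ _ hL.ne'] at hsub
  rw [hsub, smul_eq_mul, ← intervalIntegral.integral_const_mul,
    ← intervalIntegral.integral_const_mul]
  refine integral_congr fun s _ => ?_
  ring

theorem tendsto_integral_mul_mul_exp_neg {h : ℝ → ℝ} {α : ℝ} (hα : 0 < α)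
    (hh : ContinuousOn h (Icc 0 α)) :
    Tendsto (fun L => ∫ u in 0..α * L, h (u / L) * (u * exp (-u))) atTop (𝓝 (h 0)) := by
  obtain ⟨M, hM⟩ := isCompact_Icc.exists_bound_of_continuousOn hh
  have hM0 : 0 ≤ M := (norm_nonneg _).trans (hM 0 ⟨le_rfl, hα.le⟩)
  set F : ℝ → ℝ → ℝ := fun L => (Ioc 0 (α * L)).indicator fun u => h (u / L) * (u * exp (-u))
  have hF : ∀ L, 0 < L → ∫ u in 0..α * L, h (u / L) * (u * exp (-u)) = ∫ u in Ioi 0, F L u := by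
    intro L hL
    rw [integral_of_le (by positivity), setIntegral_indicator measurableSet_Ioc,
      inter_eq_right.mpr Ioc_subset_Ioi_self]
  have hmaps : ∀ L, 0 < L → MapsTo (· / L) (Ioc 0 (α * L)) (Icc 0 α) := fun L hL u hu =>
    ⟨div_nonneg hu.1.le hL.le, div_le_of_le_mul₀ hL.le hα.le (by linarith [hu.2])⟩
  have key : Tendsto (fun L => ∫ u in Ioi 0, F L u) atTop
      (𝓝 (∫ u in Ioi 0, h 0 * (u * exp (-u)))) := by
    refine tendsto_integral_filter_of_dominated_convergence (fun u => M * (u * exp (-u))) ?_ ?_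
      (integrableOn_mul_exp_neg_Ioi.const_mul M) ?_
    · filter_upwards [eventually_gt_atTop 0] with L hL
      refine (aestronglyMeasurable_indicator_iff measurableSet_Ioc).mpr ?_ |>.restrict
      exact ((hh.comp (continuousOn_id.div_const L) (hmaps L hL)).mul
        (by fun_prop)).aestronglyMeasurable measurableSet_Ioc
    · filter_upwards [eventually_gt_atTop 0] with L hL
      filter_upwards [ae_restrict_mem measurableSet_Ioi] with u (hu : 0 < u)
      simp only [F]
      by_cases hmem : u ∈ Ioc 0 (α * L)
      · have hpos : 0 ≤ u * exp (-u) := by positivity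
        rw [indicator_of_mem hmem, norm_mul, Real.norm_of_nonneg hpos]
        exact mul_le_mul_of_nonneg_right (hM _ (hmaps L hL hmem)) hpos
      · rw [indicator_of_notMem hmem, norm_zero]
        positivity
    · filter_upwards [ae_restrict_mem measurableSet_Ioi] with u (hu : 0 < u)
      have hmem : ∀ᶠ L in atTop, 0 < L ∧ u ∈ Ioc 0 (α * L) := by
        filter_upwards [eventually_gt_atTop 0,
          (tendsto_id.const_mul_atTop hα).eventually_ge_atTop u] with L hL huL using ⟨hL, hu, huL⟩
      have hdiv : Tendsto (fun L => u / L) atTop (𝓝[Icc 0 α] 0) :=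
        tendsto_nhdsWithin_iff.mpr ⟨tendsto_const_nhds.div_atTop tendsto_id,
          hmem.mono fun L hL => hmaps L hL.1 hL.2⟩
      refine (((hh 0 ⟨le_rfl, hα.le⟩).tendsto.comp hdiv).mul_const _).congr' ?_
      filter_upwards [hmem] with L hL
      simp [F, indicator_of_mem hL.2]
  rw [MeasureTheory.integral_const_mul, integral_mul_exp_neg_Ioi, mul_one] at key
  exact key.congr' (by filter_upwards [eventually_gt_atTop 0] with L hL using (hF L hL).symm)

theorem rhoMSt_zero_div_eq {α w : ℝ} (hα : α ≠ 0) (hw : 0 < w) :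
    rhoMSt α 0 w / ((1 / α) * w ^ (-1 : ℝ) / log w ^ 2) =
      log w ^ 2 * ∫ s in 0..α, s * (Gamma (1 - s))⁻¹ * exp (-(log w * s)) := by
  have hintegrand : ∀ s : ℝ, s / Gamma (1 - s) * w ^ (-1 - s) =
      w ^ (-1 : ℝ) * (s * (Gamma (1 - s))⁻¹ * exp (-(log w * s))) := by
    intro s
    rw [show -1 - s = -1 + -s by ring, rpow_add hw, rpow_def_of_pos hw (-s), mul_neg]
    ring
  simp only [rhoMSt, sub_zero, hintegrand, intervalIntegral.integral_const_mul]
  generalize ∫ s in 0..α, s * (Gamma (1 - s))⁻¹ * exp (-(log w * s)) = I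
  field_simp

theorem stmt_13_general (α : ℝ) (h0 : 0 < α) :
    Filter.Tendsto
      (fun w : ℝ => rhoMSt α 0 w / ((1 / α) * w ^ (-1 : ℝ) / (Real.log w) ^ 2))
      Filter.atTop (nhds 1) := by
  have hcont : ContinuousOn (fun s => (Gamma (1 - s))⁻¹) (Icc 0 α) :=
    (continuous_inv_Gamma.comp (continuous_sub_left 1)).continuousOn
  have hlim := (tendsto_integral_mul_mul_exp_neg h0 hcont).comp tendsto_log_atTop
  simp only [sub_zero, Gamma_one, inv_one] at hlim
  refine hlim.congr' ?_
  filter_upwards [eventually_gt_atTop 1] with w hw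
  rw [Function.comp_apply, rhoMSt_zero_div_eq h0.ne' (one_pos.trans hw),
    integral_mul_mul_exp_neg_eq (log_pos hw)]

theorem stmt_13 (α : ℝ) (h0 : 0 < α) (h1 : α ≤ 1) :
    Filter.Tendsto
      (fun w : ℝ => rhoMSt α 0 w / ((1 / α) * w ^ (-1 : ℝ) / (Real.log w) ^ 2))
      Filter.atTop (nhds 1) :=
  stmt_13_general α h0
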